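/- Let G be a finite connected simple graph with γ'MB(G) = 2 and let x be a cut-vertex of G. Then G − x has exactly two connected components. -/
import Mathlib


/-- `D` is a dominating set of `G`: every vertex not in `D` has a neighbor in `D`. -/
def Dominating {V : Type*} (G : SimpleGraph V) (D : Set V) : Prop :=
  ∀ v, v ∉ D → ∃ d ∈ D, G.Adj d v

/-- Dominator wins the S-game on `G` within one move. -/
def WinsWithin1 {V : Type*} (G : SimpleGraph V) : Prop :=
  ∀ s₁ : V, ∃ d₁, d₁ ≠ s₁ ∧ Dominating G {d₁}

/-- Dominator wins the S-game on `G` within two moves. -/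
def WinsWithin2 {V : Type*} (G : SimpleGraph V) : Prop :=
  ∀ s₁ : V, ∃ d₁, d₁ ≠ s₁ ∧
    (Dominating G {d₁} ∨
      ∀ s₂, s₂ ∉ ({s₁, d₁} : Set V) →
        ∃ d₂, d₂ ∉ ({s₁, d₁, s₂} : Set V) ∧ Dominating G {d₁, d₂})

/-- `γ'MB(G) = 2`: Dominator wins the S-game within two moves but not within one. -/
def MBPrimeEqTwo {V : Type*} (G : SimpleGraph V) : Prop :=
  WinsWithin2 G ∧ ¬ WinsWithin1 G

/-- `G` is `2`-`γ'MB`-critical: `γ'MB(G) = 2` and for every edge `e`, Dominator does not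
win the S-game on `G - e` within two moves. -/
def Critical2 {V : Type*} (G : SimpleGraph V) : Prop :=
  MBPrimeEqTwo G ∧ ∀ u v : V, G.Adj u v → ¬ WinsWithin2 (G.deleteEdges {s(u, v)})

/-- `G - x` has exactly two connected components, with vertex sets `C₁` and `C₂`. -/
def IsTwoComponents {V : Type*} (G : SimpleGraph V) (x : V) (C₁ C₂ : Set V) : Prop :=
  C₁.Nonempty ∧ C₂.Nonempty ∧ Disjoint C₁ C₂ ∧ C₁ ∪ C₂ = {x}ᶜ ∧
    (G.induce C₁).Connected ∧ (G.induce C₂).Connected ∧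
    ∀ u ∈ C₁, ∀ v ∈ C₂, ¬ G.Adj u v

open SimpleGraph

lemma induce_reach_transfer {V : Type*} (G : SimpleGraph V) {C D : Set V} :
    ∀ {u v : ↥D} (p : (G.induce D).Walk u v), (∀ w ∈ p.support, (↑w : V) ∈ C) →
      ∀ (hu : (↑u : V) ∈ C) (hv : (↑v : V) ∈ C),
        (G.induce C).Reachable ⟨↑u, hu⟩ ⟨↑v, hv⟩ := by
  intro u v p
  induction p with
  | nil => intro _ hu hv; exact Reachable.refl _
  | @cons u w v h p ih =>
    intro hp hu hv
    have hw : (↑w : V) ∈ C := hp w (by simp)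
    have h1 : (G.induce C).Adj ⟨↑u, hu⟩ ⟨↑w, hw⟩ := by
      simp only [comap_adj, Function.Embedding.coe_subtype] at h ⊢
      exact h
    exact h1.reachable.trans (ih (fun z hz => hp z (by simp [hz])) hw hv)

theorem stmt16 {V : Type*} [Fintype V] (G : SimpleGraph V) (hconn : G.Connected)
    (hMB : MBPrimeEqTwo G) (x : V)
    (hcut : ¬ (G.induce ({x}ᶜ : Set V)).Connected) :
    ∃ C₁ C₂ : Set V, IsTwoComponents G x C₁ C₂ := by
  classical
  set S : Set V := {x}ᶜ with hS
  set H : SimpleGraph ↥S := G.induce S with hH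
  obtain ⟨d₁, hd₁x, hcase⟩ := hMB.1 x
  have hd₁S : d₁ ∈ S := by simp [hS, hd₁x]
  -- Case 1 is impossible: a universal dominator would make G - x connected.
  have hcase2 : ∀ s₂, s₂ ∉ ({x, d₁} : Set V) →
      ∃ d₂, d₂ ∉ ({x, d₁, s₂} : Set V) ∧ Dominating G {d₁, d₂} := by
    rcases hcase with hdom | h2
    · exfalso
      apply hcut
      have key : ∀ w : ↥S, H.Reachable ⟨d₁, hd₁S⟩ w := by
        intro w
        by_cases hw : (↑w : V) = d₁
        · have : w = ⟨d₁, hd₁S⟩ := Subtype.ext hw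
          rw [this]
        · obtain ⟨d, hd, hadj⟩ := hdom ↑w (by simpa using hw)
          rcases hd with rfl
          have : H.Adj ⟨d, hd₁S⟩ w := by
            simp only [hH, comap_adj, Function.Embedding.coe_subtype]
            exact hadj
          exact this.reachable
      haveI : Nonempty ↥S := ⟨⟨d₁, hd₁S⟩⟩
      exact ⟨fun u v => (key u).symm.trans (key v)⟩
    · exact h2
  -- Staller can pick a second vertex s₂ ∉ {x, d₁}.
  have hnp : ∃ u v : ↥S, ¬ H.Reachable u v := by
    by_contra hcon
    push_neg at hcon
    haveI : Nonempty ↥S := ⟨⟨d₁, hd₁S⟩⟩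
    exact hcut ⟨fun u v => hcon u v⟩
  obtain ⟨u₀, v₀, huv⟩ := hnp
  have hs₂ : ∃ s₂ : V, s₂ ∈ S ∧ s₂ ≠ d₁ := by
    by_cases h : (↑u₀ : V) = d₁
    · refine ⟨↑v₀, v₀.2, fun heq => huv ?_⟩
      have : u₀ = v₀ := Subtype.ext (h.trans heq.symm)
      rw [this]
    · exact ⟨↑u₀, u₀.2, h⟩
  obtain ⟨s₂, hs₂S, hs₂d₁⟩ := hs₂
  have hs₂x : s₂ ≠ x := by simpa [hS] using hs₂S
  obtain ⟨d₂, hd₂mem, hdom⟩ := hcase2 s₂ (by simp [hs₂x, hs₂d₁])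
  have hd₂x : d₂ ≠ x := by intro h; exact hd₂mem (by simp [h])
  have hd₂S : d₂ ∈ S := by simp [hS, hd₂x]
  have hd₂d₁ : d₂ ≠ d₁ := by intro h; exact hd₂mem (by simp [h])
  set a : ↥S := ⟨d₁, hd₁S⟩ with ha
  set b : ↥S := ⟨d₂, hd₂S⟩ with hb
  -- every vertex of G - x is reachable from d₁ or from d₂
  have key : ∀ w : ↥S, H.Reachable a w ∨ H.Reachable b w := by
    intro w
    by_cases h1 : (↑w : V) = d₁
    · left; have : w = a := Subtype.ext h1; rw [this]
    · by_cases h2 : (↑w : V) = d₂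
      · right; have : w = b := Subtype.ext h2; rw [this]
      · obtain ⟨d, hd, hadj⟩ := hdom ↑w (by simp [h1, h2])
        rcases hd with rfl | rfl
        · left
          have : H.Adj a w := by
            simp only [hH, comap_adj, Function.Embedding.coe_subtype]; exact hadj
          exact this.reachable
        · right
          have : H.Adj b w := by
            simp only [hH, comap_adj, Function.Embedding.coe_subtype]; exact hadj
          exact this.reachable
  have hab : ¬ H.Reachable a b := by
    intro hab
    apply hcut
    have r : ∀ w, H.Reachable a w := fun w => (key w).elim id hab.trans
    haveI : Nonempty ↥S := ⟨a⟩
    exact ⟨fun p q => (r p).symm.trans (r q)⟩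
  refine ⟨{v : V | ∃ h : v ∈ S, H.Reachable a ⟨v, h⟩},
          {v : V | ∃ h : v ∈ S, H.Reachable b ⟨v, h⟩}, ?_, ?_, ?_, ?_, ?_, ?_, ?_⟩
  · exact ⟨d₁, hd₁S, Reachable.refl _⟩
  · exact ⟨d₂, hd₂S, Reachable.refl _⟩
  · rw [Set.disjoint_left]
    rintro v ⟨h₁, hr₁⟩ ⟨h₂, hr₂⟩
    exact hab (hr₁.trans hr₂.symm)
  · ext v
    constructor
    · rintro (⟨h, -⟩ | ⟨h, -⟩) <;> exact h
    · intro hv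
      rcases key ⟨v, hv⟩ with hr | hr
      · exact Or.inl ⟨hv, hr⟩
      · exact Or.inr ⟨hv, hr⟩
  · -- connectivity of the first component
    haveI : Nonempty ↥{v : V | ∃ h : v ∈ S, H.Reachable a ⟨v, h⟩} :=
      ⟨⟨d₁, hd₁S, Reachable.refl _⟩⟩
    refine ⟨?_⟩
    rintro ⟨u, hSu, hru⟩ ⟨v, hSv, hrv⟩
    obtain ⟨p⟩ := hru.symm.trans hrv
    have hsup : ∀ w ∈ p.support, (↑w : V) ∈ {v : V | ∃ h : v ∈ S, H.Reachable a ⟨v, h⟩} := by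
      intro w hw
      exact ⟨w.2, hru.trans ⟨p.takeUntil w hw⟩⟩
    exact induce_reach_transfer G p hsup ⟨hSu, hru⟩ ⟨hSv, hrv⟩
  · haveI : Nonempty ↥{v : V | ∃ h : v ∈ S, H.Reachable b ⟨v, h⟩} :=
      ⟨⟨d₂, hd₂S, Reachable.refl _⟩⟩
    refine ⟨?_⟩
    rintro ⟨u, hSu, hru⟩ ⟨v, hSv, hrv⟩
    obtain ⟨p⟩ := hru.symm.trans hrv
    have hsup : ∀ w ∈ p.support, (↑w : V) ∈ {v : V | ∃ h : v ∈ S, H.Reachable b ⟨v, h⟩} := by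
      intro w hw
      exact ⟨w.2, hru.trans ⟨p.takeUntil w hw⟩⟩
    exact induce_reach_transfer G p hsup ⟨hSu, hru⟩ ⟨hSv, hrv⟩
  · rintro u ⟨hSu, hru⟩ v ⟨hSv, hrv⟩ hadj
    have : H.Adj ⟨u, hSu⟩ ⟨v, hSv⟩ := by
      simp only [hH, comap_adj, Function.Embedding.coe_subtype]; exact hadj
    exact hab (hru.trans (this.reachable.trans hrv.symm))
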